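/- Let n ≥ d ≥ 1 and let A, A' ∈ ℝ^{n×d} have full column rank, with rows a_1ᵀ,…,a_nᵀ and a'_1ᵀ,…,a'_nᵀ respectively. Suppose A and A' differ only in the j-th row and ‖a_j − a'_j‖₂ ≤ ε₀. Let c ∈ (0,1] and let w ∈ ℝⁿ satisfy c ≤ w_i ≤ 1 for all i, with W = diag(w). Suppose ε₀ ≤ 0.1·√c·σmin(A), and set ε₁ := 8·c⁻²·κ(A)·σmin(A)⁻³·ε₀. Then |f(w,A)_j − f(w,A')_j| ≤ ε₁·(σmax(A)+ε₀)² + ε₀·σmin(W^{1/2}A)⁻²·(2σmax(A)+ε₀). -/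

import Mathlib

open Matrix

noncomputable def l2norm {m : Type*} [Fintype m] (x : m → ℝ) : ℝ :=
  Real.sqrt (∑ i, x i ^ 2)

/-- Spectral (operator) norm with respect to Euclidean norms. -/
noncomputable def specNorm {m k : Type*} [Fintype m] [Fintype k] (A : Matrix m k ℝ) : ℝ :=
  sSup {r | ∃ x : k → ℝ, l2norm x = 1 ∧ r = l2norm (A.mulVec x)}

/-- Largest singular value. -/
noncomputable def sigmaMax {m k : Type*} [Fintype m] [Fintype k] (A : Matrix m k ℝ) : ℝ :=
  specNorm A

/-- Smallest singular value. -/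
noncomputable def sigmaMin {m k : Type*} [Fintype m] [Fintype k] (A : Matrix m k ℝ) : ℝ :=
  sInf {r | ∃ x : k → ℝ, l2norm x = 1 ∧ r = l2norm (A.mulVec x)}

/-- Condition number. -/
noncomputable def kappa {m k : Type*} [Fintype m] [Fintype k] (A : Matrix m k ℝ) : ℝ :=
  sigmaMax A / sigmaMin A

/-- The weighted leverage score vector `f(w, A)`, with
`f(w,A)_i = w_i · a_iᵀ (Aᵀ W A)⁻¹ a_i` where `W = diag(w)`. -/
noncomputable def lewisF {n d : ℕ} (w : Fin n → ℝ) (A : Matrix (Fin n) (Fin d) ℝ)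
    (i : Fin n) : ℝ :=
  w i * (A i ⬝ᵥ ((Aᵀ * Matrix.diagonal w * A)⁻¹).mulVec (A i))

/-! ### Auxiliary lemmas about `l2norm` -/

lemma l2norm_eq_norm {k : Type*} [Fintype k] (x : k → ℝ) :
    l2norm x = ‖(WithLp.equiv 2 (k → ℝ)).symm x‖ := by
  rw [EuclideanSpace.norm_eq, l2norm]
  congr 1
  apply Finset.sum_congr rfl; intro i _
  simp [WithLp.equiv_symm_apply, Real.norm_eq_abs, sq_abs]

lemma l2norm_nonneg {k : Type*} [Fintype k] (x : k → ℝ) : 0 ≤ l2norm x := Real.sqrt_nonneg _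

lemma l2norm_cs {k : Type*} [Fintype k] (x y : k → ℝ) :
    |x ⬝ᵥ y| ≤ l2norm x * l2norm y := by
  rw [l2norm_eq_norm, l2norm_eq_norm]
  have h : x ⬝ᵥ y = inner ℝ ((WithLp.equiv 2 (k → ℝ)).symm x) ((WithLp.equiv 2 (k → ℝ)).symm y) := by
    simp [dotProduct, PiLp.inner_apply, WithLp.equiv_symm_apply, mul_comm]
  rw [h]
  exact abs_real_inner_le_norm _ _

lemma l2norm_smul {k : Type*} [Fintype k] (a : ℝ) (x : k → ℝ) :
    l2norm (a • x) = |a| * l2norm x := by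
  rw [l2norm_eq_norm, l2norm_eq_norm]
  have : (WithLp.equiv 2 (k → ℝ)).symm (a • x) = a • (WithLp.equiv 2 (k → ℝ)).symm x := rfl
  rw [this, norm_smul, Real.norm_eq_abs]

lemma l2norm_add_le {k : Type*} [Fintype k] (x y : k → ℝ) :
    l2norm (x + y) ≤ l2norm x + l2norm y := by
  rw [l2norm_eq_norm, l2norm_eq_norm, l2norm_eq_norm]
  have : (WithLp.equiv 2 (k → ℝ)).symm (x + y)
      = (WithLp.equiv 2 (k → ℝ)).symm x + (WithLp.equiv 2 (k → ℝ)).symm y := rfl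
  rw [this]; exact norm_add_le _ _

lemma l2norm_neg {k : Type*} [Fintype k] (x : k → ℝ) : l2norm (-x) = l2norm x := by
  simp [l2norm]

lemma l2norm_eq_zero {k : Type*} [Fintype k] {x : k → ℝ} (h : l2norm x = 0) : x = 0 := by
  rw [l2norm_eq_norm] at h
  have := norm_eq_zero.mp h
  simpa using congrArg (WithLp.equiv 2 (k → ℝ)) this

lemma l2norm_sq {k : Type*} [Fintype k] (x : k → ℝ) : l2norm x ^ 2 = ∑ i, x i ^ 2 := by
  rw [l2norm, Real.sq_sqrt]; positivity

/-! ### Auxiliary lemmas about `sigmaMin`/`sigmaMax` -/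

section sigma
variable {m d : ℕ}

lemma exists_unit (hd : 0 < d) : ∃ x : Fin d → ℝ, l2norm x = 1 := by
  refine ⟨fun i => if i = ⟨0, hd⟩ then 1 else 0, ?_⟩
  have h : ∑ i : Fin d, (if i = (⟨0, hd⟩ : Fin d) then (1:ℝ) else 0) ^ 2 = 1 := by
    rw [Finset.sum_eq_single (⟨0, hd⟩ : Fin d)]
    · simp
    · intro b _ hb; simp [hb]
    · simp
  rw [l2norm, h, Real.sqrt_one]

lemma sigmaSet_nonempty (A : Matrix (Fin m) (Fin d) ℝ) (hd : 0 < d) :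
    {r | ∃ x : Fin d → ℝ, l2norm x = 1 ∧ r = l2norm (A.mulVec x)}.Nonempty := by
  obtain ⟨x, hx⟩ := exists_unit (d := d) hd
  exact ⟨l2norm (A.mulVec x), x, hx, rfl⟩

lemma sigmaSet_bddBelow (A : Matrix (Fin m) (Fin d) ℝ) :
    BddBelow {r | ∃ x : Fin d → ℝ, l2norm x = 1 ∧ r = l2norm (A.mulVec x)} := by
  refine ⟨0, ?_⟩
  rintro r ⟨x, -, rfl⟩
  exact l2norm_nonneg _

lemma mulVec_l2_bound (A : Matrix (Fin m) (Fin d) ℝ) (x : Fin d → ℝ) :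
    l2norm (A.mulVec x) ≤ (∑ i, l2norm (A i)) * l2norm x := by
  have h1 : ∀ i, (A.mulVec x i) ^ 2 ≤ (l2norm (A i) * l2norm x) ^ 2 := by
    intro i
    have hcs : |A i ⬝ᵥ x| ≤ l2norm (A i) * l2norm x := l2norm_cs _ _
    have : |A.mulVec x i| ≤ l2norm (A i) * l2norm x := by
      simpa [Matrix.mulVec, dotProduct] using hcs
    calc (A.mulVec x i) ^ 2 = |A.mulVec x i| ^ 2 := by rw [sq_abs]
    _ ≤ (l2norm (A i) * l2norm x) ^ 2 := by
        exact pow_le_pow_left₀ (abs_nonneg _) this 2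
  have h2 : ∑ i, (A.mulVec x i) ^ 2 ≤ ∑ i, (l2norm (A i) * l2norm x) ^ 2 :=
    Finset.sum_le_sum (fun i _ => h1 i)
  have h3 : ∑ i, (l2norm (A i) * l2norm x) ^ 2 ≤ (∑ i, l2norm (A i) * l2norm x) ^ 2 :=
    Finset.sum_sq_le_sq_sum_of_nonneg (fun i _ =>
      mul_nonneg (l2norm_nonneg _) (l2norm_nonneg _))
  have h4 : (∑ i, l2norm (A i) * l2norm x) = (∑ i, l2norm (A i)) * l2norm x :=
    (Finset.sum_mul _ _ _).symm
  rw [l2norm]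
  calc Real.sqrt (∑ i, A.mulVec x i ^ 2)
      ≤ Real.sqrt (((∑ i, l2norm (A i)) * l2norm x)^2) := by
        apply Real.sqrt_le_sqrt
        rw [← h4]; exact le_trans h2 h3
  _ = (∑ i, l2norm (A i)) * l2norm x := Real.sqrt_sq
      (mul_nonneg (Finset.sum_nonneg fun i _ => l2norm_nonneg _) (l2norm_nonneg _))

lemma sigmaSet_bddAbove (A : Matrix (Fin m) (Fin d) ℝ) :
    BddAbove {r | ∃ x : Fin d → ℝ, l2norm x = 1 ∧ r = l2norm (A.mulVec x)} := by
  refine ⟨∑ i, l2norm (A i), ?_⟩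
  rintro r ⟨x, hx, rfl⟩
  have := mulVec_l2_bound A x
  rwa [hx, mul_one] at this

lemma le_sigmaMax (A : Matrix (Fin m) (Fin d) ℝ) {x : Fin d → ℝ} (hx : l2norm x = 1) :
    l2norm (A.mulVec x) ≤ sigmaMax A :=
  le_csSup (sigmaSet_bddAbove A) ⟨x, hx, rfl⟩

lemma sigmaMin_le (A : Matrix (Fin m) (Fin d) ℝ) {x : Fin d → ℝ} (hx : l2norm x = 1) :
    sigmaMin A ≤ l2norm (A.mulVec x) :=
  csInf_le (sigmaSet_bddBelow A) ⟨x, hx, rfl⟩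

lemma mulVec_le_sigmaMax (A : Matrix (Fin m) (Fin d) ℝ) (x : Fin d → ℝ) :
    l2norm (A.mulVec x) ≤ sigmaMax A * l2norm x := by
  rcases eq_or_ne (l2norm x) 0 with h | h
  · rw [l2norm_eq_zero h]
    simp [Matrix.mulVec_zero, l2norm, h]
  · have hpos : 0 < l2norm x := lt_of_le_of_ne (l2norm_nonneg x) (Ne.symm h)
    set u := (l2norm x)⁻¹ • x with hu
    have hunit : l2norm u = 1 := by
      rw [hu, l2norm_smul, abs_of_pos (inv_pos.mpr hpos), inv_mul_cancel₀ h]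
    have hx : x = (l2norm x) • u := by
      rw [hu, smul_smul, mul_inv_cancel₀ h, one_smul]
    calc l2norm (A.mulVec x) = l2norm (A.mulVec ((l2norm x) • u)) := by rw [← hx]
    _ = l2norm ((l2norm x) • A.mulVec u) := by rw [Matrix.mulVec_smul]
    _ = l2norm x * l2norm (A.mulVec u) := by
        rw [l2norm_smul, abs_of_pos hpos]
    _ ≤ l2norm x * sigmaMax A := by
        exact mul_le_mul_of_nonneg_left (le_sigmaMax A hunit) (le_of_lt hpos)
    _ = sigmaMax A * l2norm x := mul_comm _ _

lemma sigmaMin_mulVec_le (A : Matrix (Fin m) (Fin d) ℝ) (x : Fin d → ℝ) :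
    sigmaMin A * l2norm x ≤ l2norm (A.mulVec x) := by
  rcases eq_or_ne (l2norm x) 0 with h | h
  · rw [h, mul_zero]; exact l2norm_nonneg _
  · have hpos : 0 < l2norm x := lt_of_le_of_ne (l2norm_nonneg x) (Ne.symm h)
    set u := (l2norm x)⁻¹ • x with hu
    have hunit : l2norm u = 1 := by
      rw [hu, l2norm_smul, abs_of_pos (inv_pos.mpr hpos), inv_mul_cancel₀ h]
    have hx : x = (l2norm x) • u := by
      rw [hu, smul_smul, mul_inv_cancel₀ h, one_smul]
    have := sigmaMin_le A hunit
    calc sigmaMin A * l2norm x ≤ l2norm (A.mulVec u) * l2norm x :=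
          mul_le_mul_of_nonneg_right this (le_of_lt hpos)
    _ = l2norm ((l2norm x) • A.mulVec u) := by
        rw [l2norm_smul, abs_of_pos hpos, mul_comm]
    _ = l2norm (A.mulVec x) := by rw [← Matrix.mulVec_smul, ← hx]

lemma le_sigmaMin (A : Matrix (Fin m) (Fin d) ℝ) (hd : 0 < d) {b : ℝ}
    (h : ∀ x : Fin d → ℝ, l2norm x = 1 → b ≤ l2norm (A.mulVec x)) : b ≤ sigmaMin A := by
  apply le_csInf (sigmaSet_nonempty A hd)
  rintro r ⟨x, hx, rfl⟩
  exact h x hx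

lemma sigmaMin_nonneg (A : Matrix (Fin m) (Fin d) ℝ) (hd : 0 < d) : 0 ≤ sigmaMin A :=
  le_sigmaMin A hd (fun _ _ => l2norm_nonneg _)

lemma sigmaMax_nonneg (A : Matrix (Fin m) (Fin d) ℝ) (hd : 0 < d) : 0 ≤ sigmaMax A := by
  obtain ⟨x, hx⟩ := exists_unit (d := d) hd
  exact le_trans (l2norm_nonneg (A.mulVec x)) (le_sigmaMax A hx)

lemma sigmaMin_le_sigmaMax (A : Matrix (Fin m) (Fin d) ℝ) (hd : 0 < d) :
    sigmaMin A ≤ sigmaMax A := by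
  obtain ⟨x, hx⟩ := exists_unit (d := d) hd
  exact le_trans (sigmaMin_le A hx) (le_sigmaMax A hx)

lemma row_le_sigmaMax (A : Matrix (Fin m) (Fin d) ℝ) (hd : 0 < d) (i : Fin m) :
    l2norm (A i) ≤ sigmaMax A := by
  rcases eq_or_ne (l2norm (A i)) 0 with h | h
  · rw [h]; exact sigmaMax_nonneg A hd
  · have hpos : 0 < l2norm (A i) := lt_of_le_of_ne (l2norm_nonneg _) (Ne.symm h)
    have hcoord : (l2norm (A i))^2 = A.mulVec (A i) i := by
      rw [l2norm_sq]; simp [Matrix.mulVec, dotProduct, sq]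
    have habs : |A.mulVec (A i) i| ≤ l2norm (A.mulVec (A i)) := by
      rw [l2norm]
      have h1 : (A.mulVec (A i) i)^2 ≤ ∑ l, (A.mulVec (A i) l)^2 :=
        Finset.single_le_sum (f := fun l => (A.mulVec (A i) l)^2)
          (fun l _ => sq_nonneg _) (Finset.mem_univ i)
      calc |A.mulVec (A i) i| = Real.sqrt ((A.mulVec (A i) i)^2) := (Real.sqrt_sq_eq_abs _).symm
      _ ≤ _ := Real.sqrt_le_sqrt h1
    have hle := le_trans habs (mulVec_le_sigmaMax A (A i))
    rw [← hcoord] at hle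
    have h2 : (l2norm (A i))^2 ≤ sigmaMax A * l2norm (A i) :=
      le_trans (le_abs_self _) hle
    nlinarith [hpos]

lemma sigmaMin_pos (A : Matrix (Fin m) (Fin d) ℝ) (hd : 0 < d)
    (hinj : Function.Injective A.mulVec) : 0 < sigmaMin A := by
  haveI : Nonempty (Fin d) := ⟨⟨0, hd⟩⟩
  haveI : Nontrivial (EuclideanSpace ℝ (Fin d)) := by infer_instance
  have hFval : ∀ y : EuclideanSpace ℝ (Fin d),
      ‖(Matrix.toEuclideanLin A) y‖ = l2norm (A.mulVec ((WithLp.equiv 2 (Fin d → ℝ)) y)) := by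
    intro y
    rw [Matrix.toEuclideanLin_apply]; exact (l2norm_eq_norm _).symm
  have hcont : Continuous (fun y : EuclideanSpace ℝ (Fin d) => ‖(Matrix.toEuclideanLin A) y‖) :=
    (Matrix.toEuclideanLin A).continuous_of_finiteDimensional.norm
  have hsph : (Metric.sphere (0 : EuclideanSpace ℝ (Fin d)) 1).Nonempty :=
    NormedSpace.sphere_nonempty.mpr zero_le_one
  obtain ⟨y₀, hy₀, hmin⟩ := (isCompact_sphere (0 : EuclideanSpace ℝ (Fin d)) 1).exists_isMinOn
    hsph hcont.continuousOn
  have hy₀n : ‖y₀‖ = 1 := by simpa only [Metric.mem_sphere, dist_zero_right] using hy₀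
  set x₀ : Fin d → ℝ := (WithLp.equiv 2 (Fin d → ℝ)) y₀ with hx₀
  have hpos : 0 < l2norm (A.mulVec x₀) := by
    rcases lt_or_eq_of_le (l2norm_nonneg (A.mulVec x₀)) with h | h
    · exact h
    · exfalso
      have hz : A.mulVec x₀ = 0 := l2norm_eq_zero h.symm
      have hx0 : x₀ = 0 := by
        apply hinj
        rw [hz, Matrix.mulVec_zero]
      have : y₀ = 0 := by
        exact (WithLp.equiv 2 (Fin d → ℝ)).injective
          (hx0.trans (WithLp.ofLp_zero (p := 2) (V := Fin d → ℝ)).symm)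
      rw [this, norm_zero] at hy₀n
      exact one_ne_zero (α := ℝ) hy₀n.symm
  have hlow : l2norm (A.mulVec x₀) ≤ sigmaMin A := by
    apply le_sigmaMin A hd
    intro x hx
    have hmem : ((WithLp.equiv 2 (Fin d → ℝ)).symm x) ∈
        Metric.sphere (0 : EuclideanSpace ℝ (Fin d)) 1 := by
      simp only [Metric.mem_sphere, dist_zero_right, ← l2norm_eq_norm, hx]
    have h1 : ‖(Matrix.toEuclideanLin A) y₀‖ ≤
        ‖(Matrix.toEuclideanLin A) ((WithLp.equiv 2 (Fin d → ℝ)).symm x)‖ := hmin hmem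
    rw [hFval, hFval] at h1
    simpa [hx₀] using h1
  linarith

end sigma

/-! ### Auxiliary matrix-algebra lemmas -/

lemma M_apply {n d : ℕ} (w : Fin n → ℝ) (A : Matrix (Fin n) (Fin d) ℝ) (v : Fin d → ℝ) :
    (Aᵀ * Matrix.diagonal w * A).mulVec v = fun k => ∑ i, w i * A i k * (A i ⬝ᵥ v) := by
  funext k
  have h1 : (Aᵀ * Matrix.diagonal w * A).mulVec v
      = Aᵀ.mulVec ((Matrix.diagonal w).mulVec (A.mulVec v)) := by
    rw [Matrix.mulVec_mulVec, Matrix.mulVec_mulVec]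
  rw [h1]
  simp only [Matrix.mulVec, dotProduct, Matrix.transpose_apply]
  apply Finset.sum_congr rfl; intro i _
  have hdd : (∑ x : Fin n, Matrix.diagonal w i x * ∑ x_1 : Fin d, A x x_1 * v x_1)
      = w i * ∑ x_1 : Fin d, A i x_1 * v x_1 :=
    diagonal_dotProduct w (fun x => ∑ x_1 : Fin d, A x x_1 * v x_1) i
  rw [hdd]; ring

lemma quad_eq {n d : ℕ} (w : Fin n → ℝ) (A : Matrix (Fin n) (Fin d) ℝ) (x : Fin d → ℝ) :
    x ⬝ᵥ (Aᵀ * Matrix.diagonal w * A).mulVec x = ∑ i, w i * (A.mulVec x i)^2 := by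
  have h1 : (Aᵀ * Matrix.diagonal w * A).mulVec x
      = Aᵀ.mulVec ((Matrix.diagonal w).mulVec (A.mulVec x)) := by
    rw [Matrix.mulVec_mulVec, Matrix.mulVec_mulVec]
  rw [h1, Matrix.dotProduct_mulVec, Matrix.vecMul_transpose]
  simp only [dotProduct, Matrix.mulVec_diagonal]
  apply Finset.sum_congr rfl
  intro i _
  ring

lemma B_mulVec {n d : ℕ} (w : Fin n → ℝ) (A : Matrix (Fin n) (Fin d) ℝ) (x : Fin d → ℝ)
    (i : Fin n) :
    (Matrix.diagonal (fun i => Real.sqrt (w i)) * A).mulVec x i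
      = Real.sqrt (w i) * (A.mulVec x) i := by
  rw [← Matrix.mulVec_mulVec, Matrix.mulVec_diagonal]

lemma Bnorm_sq {n d : ℕ} (w : Fin n → ℝ) (hw : ∀ i, 0 ≤ w i) (A : Matrix (Fin n) (Fin d) ℝ)
    (x : Fin d → ℝ) :
    l2norm ((Matrix.diagonal (fun i => Real.sqrt (w i)) * A).mulVec x) ^ 2
      = ∑ i, w i * (A.mulVec x i)^2 := by
  rw [l2norm_sq]
  apply Finset.sum_congr rfl
  intro i _
  rw [B_mulVec, mul_pow, Real.sq_sqrt (hw i)]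

lemma rank_inj {n d : ℕ} (A : Matrix (Fin n) (Fin d) ℝ) (h : A.rank = d) :
    Function.Injective A.mulVec := by
  have hker : LinearMap.ker A.mulVecLin = ⊥ := by
    have h1 := LinearMap.finrank_range_add_finrank_ker A.mulVecLin
    have h2 : Module.finrank ℝ (Fin d → ℝ) = d := by simp
    have h3 : Module.finrank ℝ (LinearMap.range A.mulVecLin) = d := h
    rw [h3] at h1
    have h4 : Module.finrank ℝ (LinearMap.ker A.mulVecLin) = 0 := by omega
    exact Submodule.finrank_eq_zero.mp h4
  have := LinearMap.ker_eq_bot.mp hker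
  intro x y hxy
  apply this
  simpa [Matrix.mulVecLin] using hxy

lemma det_unit {d : ℕ} (M : Matrix (Fin d) (Fin d) ℝ) {s : ℝ} (hs : 0 < s)
    (hquad : ∀ x, s * l2norm x ^ 2 ≤ x ⬝ᵥ M.mulVec x) : IsUnit M.det := by
  rw [isUnit_iff_ne_zero]
  intro h0
  obtain ⟨v, hv, hMv⟩ := Matrix.exists_mulVec_eq_zero_iff.mpr h0
  have h1 := hquad v
  rw [hMv, dotProduct_zero] at h1
  apply hv
  have : l2norm v ^ 2 = 0 := le_antisymm (by nlinarith) (sq_nonneg _)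
  rw [l2norm_sq] at this
  funext i
  have := (Finset.sum_eq_zero_iff_of_nonneg
    (fun i _ => sq_nonneg (v i))).mp this i (Finset.mem_univ i)
  exact (pow_eq_zero_iff two_ne_zero).mp this

lemma inv_mulVec_bound {d : ℕ} (M : Matrix (Fin d) (Fin d) ℝ) {s : ℝ} (hs : 0 < s)
    (hdet : IsUnit M.det)
    (hquad : ∀ x, s * l2norm x ^ 2 ≤ x ⬝ᵥ M.mulVec x) (y : Fin d → ℝ) :
    l2norm (M⁻¹.mulVec y) ≤ l2norm y / s := by
  set z := M⁻¹.mulVec y with hz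
  have hMz : M.mulVec z = y := by
    rw [hz, Matrix.mulVec_mulVec, Matrix.mul_nonsing_inv _ hdet, Matrix.one_mulVec]
  have h1 : s * l2norm z ^ 2 ≤ z ⬝ᵥ y := by
    have := hquad z; rwa [hMz] at this
  have h2 : z ⬝ᵥ y ≤ l2norm z * l2norm y := le_trans (le_abs_self _) (l2norm_cs _ _)
  rw [le_div_iff₀ hs]
  nlinarith [l2norm_nonneg z, l2norm_nonneg y]

lemma Msym {n d : ℕ} (w : Fin n → ℝ) (A : Matrix (Fin n) (Fin d) ℝ) :
    (Aᵀ * Matrix.diagonal w * A)ᵀ = Aᵀ * Matrix.diagonal w * A := by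
  rw [Matrix.transpose_mul, Matrix.transpose_mul, Matrix.transpose_transpose,
    Matrix.diagonal_transpose, Matrix.mul_assoc]

lemma dot_mulVec_symm {d : ℕ} {P : Matrix (Fin d) (Fin d) ℝ} (hsym : Pᵀ = P)
    (u v : Fin d → ℝ) : u ⬝ᵥ P.mulVec v = (P.mulVec u) ⬝ᵥ v := by
  rw [Matrix.dotProduct_mulVec]
  congr 1
  nth_rewrite 1 [← hsym]
  rw [Matrix.vecMul_transpose]

lemma Mdiff {n d : ℕ} (w : Fin n → ℝ) (A A' : Matrix (Fin n) (Fin d) ℝ) (j : Fin n)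
    (hrow : ∀ i : Fin n, i ≠ j → A i = A' i) (v : Fin d → ℝ) :
    (A'ᵀ * Matrix.diagonal w * A').mulVec v - (Aᵀ * Matrix.diagonal w * A).mulVec v
      = w j • ((A' j ⬝ᵥ v) • (A' j - A j) + ((A' j - A j) ⬝ᵥ v) • A j) := by
  funext k
  rw [Pi.sub_apply, M_apply, M_apply]
  simp only
  rw [← Finset.sum_sub_distrib, Finset.sum_eq_single j]
  · simp only [Pi.smul_apply, Pi.add_apply, Pi.sub_apply, smul_eq_mul,
      sub_dotProduct]
    ring
  · intro b _ hb
    rw [hrow b hb]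
    ring
  · intro h; exact absurd (Finset.mem_univ j) h

lemma arith_main (σ S ε₀ c sB2 sB'2 : ℝ) (hσpos : 0 < σ) (hσS : σ ≤ S) (hε₀0 : 0 ≤ ε₀)
    (hε₀σ : ε₀ ≤ 0.1 * σ) (hc0 : 0 < c)
    (hB : c * σ^2 ≤ sB2) (hB' : c * (σ - ε₀)^2 ≤ sB'2)
    (hBpos : 0 < sB2) (hB'pos : 0 < sB'2) :
    ε₀ * (2*S + ε₀) / (sB2 * sB'2) ≤ 8 * S * ε₀ / (c^2 * σ^4) := by
  have hS0 : 0 ≤ S := le_trans hσpos.le hσS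
  have hden : 0.81 * (c^2 * σ^4) ≤ sB2 * sB'2 := by
    have h1 : c * (0.9*σ)^2 ≤ c * (σ - ε₀)^2 := by
      apply mul_le_mul_of_nonneg_left _ hc0.le
      apply pow_le_pow_left₀ (by linarith) (by linarith)
    have h2 : (c * σ^2) * (c * (0.9*σ)^2) ≤ sB2 * sB'2 :=
      mul_le_mul hB (le_trans h1 hB') (by positivity) (by linarith)
    nlinarith [h2]
  have hnum2 : ε₀ * (2*S + ε₀) ≤ 2.1 * (ε₀ * S) := by nlinarith
  have hcore : ε₀ * (2*S + ε₀) / (sB2 * sB'2) ≤ 2.1 * (ε₀ * S) / (0.81 * (c^2 * σ^4)) :=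
    div_le_div₀ (by positivity) hnum2 (by positivity) hden
  refine le_trans hcore ?_
  rw [div_le_div_iff₀ (by positivity) (by positivity)]
  nlinarith [mul_nonneg (mul_nonneg hε₀0 hS0) (by positivity : (0:ℝ) ≤ c^2*σ^4)]

/-! ### Main theorem -/

set_option maxHeartbeats 1000000 in
theorem lewis_weights_perturbation_at_row
    (n d : ℕ) (hd : 1 ≤ d) (hdn : d ≤ n)
    (A A' : Matrix (Fin n) (Fin d) ℝ)
    (hrankA : A.rank = d) (hrankA' : A'.rank = d)
    (j : Fin n) (ε₀ : ℝ)
    (hrow : ∀ i : Fin n, i ≠ j → A i = A' i)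
    (hj : l2norm (A j - A' j) ≤ ε₀)
    (c : ℝ) (hc0 : 0 < c) (hc1 : c ≤ 1)
    (w : Fin n → ℝ) (hw : ∀ i, c ≤ w i ∧ w i ≤ 1)
    (hε₀ : ε₀ ≤ 0.1 * Real.sqrt c * sigmaMin A)
    (ε₁ : ℝ) (hε₁ : ε₁ = 8 * c⁻¹ ^ 2 * kappa A * (sigmaMin A ^ 3)⁻¹ * ε₀) :
    |lewisF w A j - lewisF w A' j| ≤
      ε₁ * (sigmaMax A + ε₀) ^ 2 +
        ε₀ * (sigmaMin (Matrix.diagonal (fun i => Real.sqrt (w i)) * A) ^ 2)⁻¹ *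
          (2 * sigmaMax A + ε₀) := by
  have hd0 : 0 < d := hd
  have hε₀0 : 0 ≤ ε₀ := le_trans (l2norm_nonneg _) hj
  have hwc : ∀ i, c ≤ w i := fun i => (hw i).1
  have hw1 : ∀ i, w i ≤ 1 := fun i => (hw i).2
  have hwpos : ∀ i, 0 < w i := fun i => lt_of_lt_of_le hc0 (hwc i)
  have hsqc_le : Real.sqrt c ≤ 1 := by
    rw [show (1:ℝ) = Real.sqrt 1 from (Real.sqrt_one).symm]
    exact Real.sqrt_le_sqrt hc1
  have hsqc_pos : 0 < Real.sqrt c := Real.sqrt_pos.mpr hc0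
  have hinjA : Function.Injective A.mulVec := rank_inj A hrankA
  have hinjA' : Function.Injective A'.mulVec := rank_inj A' hrankA'
  set σ := sigmaMin A with hσdef
  set S := sigmaMax A with hSdef
  have hσpos : 0 < σ := sigmaMin_pos A hd0 hinjA
  have hσS : σ ≤ S := sigmaMin_le_sigmaMax A hd0
  have hS0 : 0 ≤ S := le_trans hσpos.le hσS
  have hε₀σ : ε₀ ≤ 0.1 * σ := by nlinarith
  set B := Matrix.diagonal (fun i => Real.sqrt (w i)) * A with hBdef
  set B' := Matrix.diagonal (fun i => Real.sqrt (w i)) * A' with hB'def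
  have hinjB : Function.Injective B.mulVec := by
    intro x y hxy
    apply hinjA
    funext i
    have h1 := congrFun hxy i
    rw [hBdef, B_mulVec, B_mulVec] at h1
    exact mul_left_cancel₀ (ne_of_gt (Real.sqrt_pos.mpr (hwpos i))) h1
  have hinjB' : Function.Injective B'.mulVec := by
    intro x y hxy
    apply hinjA'
    funext i
    have h1 := congrFun hxy i
    rw [hB'def, B_mulVec, B_mulVec] at h1
    exact mul_left_cancel₀ (ne_of_gt (Real.sqrt_pos.mpr (hwpos i))) h1
  have hσB : 0 < sigmaMin B := sigmaMin_pos B hd0 hinjB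
  have hσB' : 0 < sigmaMin B' := sigmaMin_pos B' hd0 hinjB'
  -- difference of matrices acts only on row j
  have hdiffvec : ∀ x : Fin d → ℝ, l2norm ((A - A').mulVec x) ≤ ε₀ * l2norm x := by
    intro x
    have happ : ∀ i, (A - A').mulVec x i = (A i - A' i) ⬝ᵥ x := by
      intro i
      simp [Matrix.mulVec, dotProduct, Matrix.sub_apply, sub_mul, Finset.sum_sub_distrib]
    have hsum : ∑ i, ((A - A').mulVec x i)^2 = ((A j - A' j) ⬝ᵥ x)^2 := by
      rw [Finset.sum_eq_single j]
      · rw [happ]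
      · intro b _ hb
        rw [happ, hrow b hb, sub_self, zero_dotProduct]
        ring
      · intro h; exact absurd (Finset.mem_univ j) h
    have h2 : l2norm ((A - A').mulVec x) = |(A j - A' j) ⬝ᵥ x| := by
      rw [l2norm, hsum, Real.sqrt_sq_eq_abs]
    rw [h2]
    calc |(A j - A' j) ⬝ᵥ x| ≤ l2norm (A j - A' j) * l2norm x := l2norm_cs _ _
    _ ≤ ε₀ * l2norm x := mul_le_mul_of_nonneg_right hj (l2norm_nonneg _)
  -- lower bound for sigmaMin B
  have sq_mono : ∀ a b : ℝ, 0 ≤ a → 0 ≤ b → a^2 ≤ b^2 → a ≤ b := by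
    intro a b ha hb h
    nlinarith
  have hBlow : Real.sqrt c * σ ≤ sigmaMin B := by
    apply le_sigmaMin B hd0
    intro x hx
    apply sq_mono _ _ (by positivity) (l2norm_nonneg _)
    rw [hBdef, Bnorm_sq w (fun i => (hwpos i).le) A x]
    have h2 : c * l2norm (A.mulVec x)^2 ≤ ∑ i, w i * (A.mulVec x i)^2 := by
      rw [l2norm_sq, Finset.mul_sum]
      exact Finset.sum_le_sum (fun i _ => mul_le_mul_of_nonneg_right (hwc i) (sq_nonneg _))
    have h3 : σ ≤ l2norm (A.mulVec x) := by
      have := sigmaMin_mulVec_le A x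
      rwa [hx, mul_one] at this
    have h4 : (Real.sqrt c * σ)^2 = c * σ^2 := by
      rw [mul_pow, Real.sq_sqrt hc0.le]
    have h5 : σ^2 ≤ l2norm (A.mulVec x)^2 :=
      pow_le_pow_left₀ hσpos.le h3 2
    have h6 : c * σ^2 ≤ c * l2norm (A.mulVec x)^2 :=
      mul_le_mul_of_nonneg_left h5 hc0.le
    rw [h4]
    linarith
  -- lower bound for sigmaMin B'
  have hσε : (0:ℝ) ≤ σ - ε₀ := by linarith
  have hB'low : Real.sqrt c * (σ - ε₀) ≤ sigmaMin B' := by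
    apply le_sigmaMin B' hd0
    intro x hx
    have hA'x : σ - ε₀ ≤ l2norm (A'.mulVec x) := by
      have h1 : σ ≤ l2norm (A.mulVec x) := by
        have := sigmaMin_mulVec_le A x
        rwa [hx, mul_one] at this
      have hsplit : A.mulVec x = A'.mulVec x + (A - A').mulVec x := by
        rw [Matrix.sub_mulVec]
        funext i
        simp
      have h2 : l2norm (A.mulVec x) ≤ l2norm (A'.mulVec x) + l2norm ((A - A').mulVec x) := by
        rw [hsplit]; exact l2norm_add_le _ _
      have h3 := hdiffvec x
      rw [hx, mul_one] at h3
      linarith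
    apply sq_mono _ _ (by positivity) (l2norm_nonneg _)
    rw [hB'def, Bnorm_sq w (fun i => (hwpos i).le) A' x]
    have h2 : c * l2norm (A'.mulVec x)^2 ≤ ∑ i, w i * (A'.mulVec x i)^2 := by
      rw [l2norm_sq, Finset.mul_sum]
      exact Finset.sum_le_sum (fun i _ => mul_le_mul_of_nonneg_right (hwc i) (sq_nonneg _))
    have h4 : (Real.sqrt c * (σ - ε₀))^2 = c * (σ - ε₀)^2 := by
      rw [mul_pow, Real.sq_sqrt hc0.le]
    have h5 : (σ - ε₀)^2 ≤ l2norm (A'.mulVec x)^2 :=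
      pow_le_pow_left₀ hσε hA'x 2
    have h6 : c * (σ - ε₀)^2 ≤ c * l2norm (A'.mulVec x)^2 :=
      mul_le_mul_of_nonneg_left h5 hc0.le
    rw [h4]
    linarith
  -- quadratic-form lower bounds
  set M := Aᵀ * Matrix.diagonal w * A with hMdef
  set M' := A'ᵀ * Matrix.diagonal w * A' with hM'def
  have hquadA : ∀ x, sigmaMin B ^2 * l2norm x ^2 ≤ x ⬝ᵥ M.mulVec x := by
    intro x
    rw [hMdef, quad_eq, ← Bnorm_sq w (fun i => (hwpos i).le) A x, ← hBdef]
    have h1 := sigmaMin_mulVec_le B x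
    have h2 : (sigmaMin B * l2norm x)^2 ≤ l2norm (B.mulVec x)^2 :=
      pow_le_pow_left₀ (mul_nonneg hσB.le (l2norm_nonneg x)) h1 2
    rw [mul_pow] at h2
    linarith
  have hquadA' : ∀ x, sigmaMin B' ^2 * l2norm x ^2 ≤ x ⬝ᵥ M'.mulVec x := by
    intro x
    rw [hM'def, quad_eq, ← Bnorm_sq w (fun i => (hwpos i).le) A' x, ← hB'def]
    have h1 := sigmaMin_mulVec_le B' x
    have h2 : (sigmaMin B' * l2norm x)^2 ≤ l2norm (B'.mulVec x)^2 :=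
      pow_le_pow_left₀ (mul_nonneg hσB'.le (l2norm_nonneg x)) h1 2
    rw [mul_pow] at h2
    linarith
  have hsBpos : 0 < sigmaMin B ^ 2 := by positivity
  have hsB'pos : 0 < sigmaMin B' ^ 2 := by positivity
  have hdet : IsUnit M.det := det_unit M hsBpos hquadA
  have hdet' : IsUnit M'.det := det_unit M' hsB'pos hquadA'
  set P := M⁻¹ with hPdef
  set P' := M'⁻¹ with hP'def
  have hPsym : Pᵀ = P := by
    have hMsym : Mᵀ = M := by rw [hMdef]; exact Msym w A
    rw [hPdef, Matrix.transpose_nonsing_inv, hMsym]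
  have hPbound : ∀ y, l2norm (P.mulVec y) ≤ l2norm y / sigmaMin B ^2 :=
    fun y => inv_mulVec_bound M hsBpos hdet hquadA y
  have hP'bound : ∀ y, l2norm (P'.mulVec y) ≤ l2norm y / sigmaMin B' ^2 :=
    fun y => inv_mulVec_bound M' hsB'pos hdet' hquadA' y
  -- row vectors
  set u := A j with hudef
  set u' := A' j with hu'def
  have huu' : l2norm (u - u') ≤ ε₀ := hj
  have hu : l2norm u ≤ S := row_le_sigmaMax A hd0 j
  have hu' : l2norm u' ≤ S + ε₀ := by
    have hrepr : u' = u + (-(u - u')) := by ring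
    calc l2norm u' = l2norm (u + (-(u - u'))) := by rw [← hrepr]
    _ ≤ l2norm u + l2norm (-(u - u')) := l2norm_add_le _ _
    _ = l2norm u + l2norm (u - u') := by rw [l2norm_neg]
    _ ≤ S + ε₀ := add_le_add hu huu'
  -- decomposition
  have hfj : lewisF w A j = w j * (u ⬝ᵥ P.mulVec u) := rfl
  have hfj' : lewisF w A' j = w j * (u' ⬝ᵥ P'.mulVec u') := rfl
  set T1 := u ⬝ᵥ P.mulVec u - u' ⬝ᵥ P.mulVec u' with hT1def
  set T2 := u' ⬝ᵥ P.mulVec u' - u' ⬝ᵥ P'.mulVec u' with hT2def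
  have hsplit : lewisF w A j - lewisF w A' j = w j * (T1 + T2) := by
    rw [hfj, hfj', hT1def, hT2def]; ring
  -- bound for T1
  have hT1b : |T1| ≤ ε₀ * (2*S + ε₀) / sigmaMin B ^2 := by
    have hid : T1 = (u - u') ⬝ᵥ P.mulVec u + (P.mulVec u') ⬝ᵥ (u - u') := by
      rw [hT1def, ← dot_mulVec_symm hPsym u' (u - u'), sub_dotProduct,
        Matrix.mulVec_sub, dotProduct_sub]
      ring
    rw [hid]
    have h1 : |(u - u') ⬝ᵥ P.mulVec u| ≤ ε₀ * (l2norm u / sigmaMin B ^2) :=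
      le_trans (l2norm_cs _ _)
        (mul_le_mul huu' (hPbound u) (l2norm_nonneg _) hε₀0)
    have h2 : |(P.mulVec u') ⬝ᵥ (u - u')| ≤ (l2norm u' / sigmaMin B ^2) * ε₀ :=
      le_trans (l2norm_cs _ _)
        (mul_le_mul (hPbound u') huu' (l2norm_nonneg _) (div_nonneg (l2norm_nonneg _) hsBpos.le))
    calc |(u - u') ⬝ᵥ P.mulVec u + (P.mulVec u') ⬝ᵥ (u - u')|
        ≤ |(u - u') ⬝ᵥ P.mulVec u| + |(P.mulVec u') ⬝ᵥ (u - u')| := abs_add_le _ _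
    _ ≤ ε₀ * (l2norm u / sigmaMin B ^2) + (l2norm u' / sigmaMin B ^2) * ε₀ := add_le_add h1 h2
    _ = ε₀ * (l2norm u + l2norm u') / sigmaMin B ^2 := by ring
    _ ≤ ε₀ * (2*S + ε₀) / sigmaMin B ^2 := by
        have hnum : ε₀ * (l2norm u + l2norm u') ≤ ε₀ * (2*S + ε₀) :=
          mul_le_mul_of_nonneg_left (by linarith) hε₀0
        exact (div_le_div_iff_of_pos_right hsBpos).mpr hnum
  -- bound for T2
  have hMP' : M' * P' = 1 := by rw [hP'def]; exact Matrix.mul_nonsing_inv M' hdet'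
  have hPM : P * M = 1 := by rw [hPdef]; exact Matrix.nonsing_inv_mul M hdet
  have hPP' : P - P' = P * (M' - M) * P' := by
    calc P - P' = P * (M' * P') - (P * M) * P' := by
          rw [hMP', hPM, Matrix.mul_one, Matrix.one_mul]
    _ = P * M' * P' - P * M * P' := by noncomm_ring
    _ = P * (M' - M) * P' := by rw [Matrix.mul_sub, Matrix.sub_mul]
  set v' := P'.mulVec u' with hv'def
  have hv'b : l2norm v' ≤ (S + ε₀) / sigmaMin B' ^2 := by
    refine le_trans (hP'bound u') ?_
    exact (div_le_div_iff_of_pos_right hsB'pos).mpr hu'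
  have hT2id : T2 = (P.mulVec u') ⬝ᵥ ((M' - M).mulVec v') := by
    have h1 : T2 = u' ⬝ᵥ ((P - P').mulVec u') := by
      rw [hT2def, Matrix.sub_mulVec, dotProduct_sub]
    rw [h1, hPP', ← Matrix.mulVec_mulVec, ← Matrix.mulVec_mulVec,
      dot_mulVec_symm hPsym, hv'def]
  have hMdvec : (M' - M).mulVec v'
      = w j • ((u' ⬝ᵥ v') • (u' - u) + ((u' - u) ⬝ᵥ v') • u) := by
    have hm := Mdiff w A A' j hrow v'
    rw [← hu'def, ← hudef] at hm
    rw [hM'def, hMdef, Matrix.sub_mulVec]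
    exact hm
  have hqb : l2norm ((M' - M).mulVec v') ≤ ε₀ * (2*S + ε₀) * l2norm v' := by
    rw [hMdvec]
    have hwj : |w j| ≤ 1 := by rw [abs_of_pos (hwpos j)]; exact hw1 j
    have hu'u : l2norm (u' - u) ≤ ε₀ := by
      have : u' - u = -(u - u') := by ring
      rw [this, l2norm_neg]; exact huu'
    have hstep1 : l2norm ((u' ⬝ᵥ v') • (u' - u) + ((u' - u) ⬝ᵥ v') • u)
        ≤ |u' ⬝ᵥ v'| * l2norm (u' - u) + |(u' - u) ⬝ᵥ v'| * l2norm u := by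
      calc l2norm ((u' ⬝ᵥ v') • (u' - u) + ((u' - u) ⬝ᵥ v') • u)
          ≤ l2norm ((u' ⬝ᵥ v') • (u' - u)) + l2norm (((u' - u) ⬝ᵥ v') • u) :=
            l2norm_add_le _ _
      _ = |u' ⬝ᵥ v'| * l2norm (u' - u) + |(u' - u) ⬝ᵥ v'| * l2norm u := by
            rw [l2norm_smul, l2norm_smul]
    have hcs1 : |u' ⬝ᵥ v'| ≤ (S + ε₀) * l2norm v' :=
      le_trans (l2norm_cs _ _) (mul_le_mul_of_nonneg_right hu' (l2norm_nonneg _))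
    have hcs2 : |(u' - u) ⬝ᵥ v'| ≤ ε₀ * l2norm v' :=
      le_trans (l2norm_cs _ _) (mul_le_mul_of_nonneg_right hu'u (l2norm_nonneg _))
    calc l2norm (w j • ((u' ⬝ᵥ v') • (u' - u) + ((u' - u) ⬝ᵥ v') • u))
        = |w j| * l2norm ((u' ⬝ᵥ v') • (u' - u) + ((u' - u) ⬝ᵥ v') • u) := l2norm_smul _ _
    _ ≤ 1 * l2norm ((u' ⬝ᵥ v') • (u' - u) + ((u' - u) ⬝ᵥ v') • u) :=
        mul_le_mul_of_nonneg_right hwj (l2norm_nonneg _)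
    _ = l2norm ((u' ⬝ᵥ v') • (u' - u) + ((u' - u) ⬝ᵥ v') • u) := one_mul _
    _ ≤ |u' ⬝ᵥ v'| * l2norm (u' - u) + |(u' - u) ⬝ᵥ v'| * l2norm u := hstep1
    _ ≤ ((S + ε₀) * l2norm v') * ε₀ + (ε₀ * l2norm v') * S := by
        have t1 : |u' ⬝ᵥ v'| * l2norm (u' - u) ≤ ((S + ε₀) * l2norm v') * ε₀ :=
          mul_le_mul hcs1 hu'u (l2norm_nonneg _)
            (mul_nonneg (by linarith) (l2norm_nonneg _))
        have t2 : |(u' - u) ⬝ᵥ v'| * l2norm u ≤ (ε₀ * l2norm v') * S :=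
          mul_le_mul hcs2 hu (l2norm_nonneg _)
            (mul_nonneg hε₀0 (l2norm_nonneg _))
        linarith
    _ = ε₀ * (2*S + ε₀) * l2norm v' := by ring
  have hT2b : |T2| ≤ (S + ε₀)^2 * (ε₀ * (2*S + ε₀)) / (sigmaMin B ^2 * sigmaMin B' ^2) := by
    rw [hT2id]
    have hPu' : l2norm (P.mulVec u') ≤ (S + ε₀) / sigmaMin B ^2 :=
      le_trans (hPbound u') ((div_le_div_iff_of_pos_right hsBpos).mpr hu')
    have hq2 : l2norm ((M' - M).mulVec v')
        ≤ ε₀ * (2*S + ε₀) * ((S + ε₀) / sigmaMin B' ^2) := by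
      refine le_trans hqb ?_
      apply mul_le_mul_of_nonneg_left hv'b
      positivity
    calc |(P.mulVec u') ⬝ᵥ ((M' - M).mulVec v')|
        ≤ l2norm (P.mulVec u') * l2norm ((M' - M).mulVec v') := l2norm_cs _ _
    _ ≤ ((S + ε₀) / sigmaMin B ^2) * (ε₀ * (2*S + ε₀) * ((S + ε₀) / sigmaMin B' ^2)) :=
        mul_le_mul hPu' hq2 (l2norm_nonneg _) (by positivity)
    _ = (S + ε₀)^2 * (ε₀ * (2*S + ε₀)) / (sigmaMin B ^2 * sigmaMin B' ^2) := by
        field_simp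
  -- combine
  have hwj1 : |w j| ≤ 1 := by rw [abs_of_pos (hwpos j)]; exact hw1 j
  have habs : |lewisF w A j - lewisF w A' j| ≤ |T1| + |T2| := by
    rw [hsplit, abs_mul]
    calc |w j| * |T1 + T2| ≤ 1 * |T1 + T2| :=
        mul_le_mul_of_nonneg_right hwj1 (abs_nonneg _)
    _ = |T1 + T2| := one_mul _
    _ ≤ |T1| + |T2| := abs_add_le _ _
  -- arithmetic comparisons
  have hsB2 : c * σ^2 ≤ sigmaMin B ^2 := by
    have h := pow_le_pow_left₀ (by positivity) hBlow 2
    rwa [mul_pow, Real.sq_sqrt hc0.le] at h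
  have hsB'2 : c * (σ - ε₀)^2 ≤ sigmaMin B' ^2 := by
    have h := pow_le_pow_left₀ (by positivity) hB'low 2
    rwa [mul_pow, Real.sq_sqrt hc0.le] at h
  have hσne : σ ≠ 0 := ne_of_gt hσpos
  have hcne : c ≠ 0 := ne_of_gt hc0
  have hε₁eq : ε₁ = 8 * S * ε₀ / (c^2 * σ^4) := by
    rw [hε₁]
    simp only [kappa]
    rw [← hσdef, ← hSdef, eq_div_iff (by positivity)]
    field_simp
  have hT2final : (S + ε₀)^2 * (ε₀ * (2*S + ε₀)) / (sigmaMin B ^2 * sigmaMin B' ^2)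
      ≤ ε₁ * (S + ε₀)^2 := by
    have hfinal : ε₀ * (2*S + ε₀) / (sigmaMin B ^2 * sigmaMin B' ^2) ≤ ε₁ := by
      rw [hε₁eq]
      exact arith_main σ S ε₀ c (sigmaMin B ^2) (sigmaMin B' ^2) hσpos hσS hε₀0 hε₀σ hc0
        hsB2 hsB'2 hsBpos hsB'pos
    calc (S + ε₀)^2 * (ε₀ * (2*S + ε₀)) / (sigmaMin B ^2 * sigmaMin B' ^2)
        = (ε₀ * (2*S + ε₀) / (sigmaMin B ^2 * sigmaMin B' ^2)) * (S + ε₀)^2 := by ring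
    _ ≤ ε₁ * (S + ε₀)^2 := mul_le_mul_of_nonneg_right hfinal (by positivity)
  calc |lewisF w A j - lewisF w A' j| ≤ |T1| + |T2| := habs
  _ ≤ ε₀ * (2*S + ε₀) / sigmaMin B ^2
      + (S + ε₀)^2 * (ε₀ * (2*S + ε₀)) / (sigmaMin B ^2 * sigmaMin B' ^2) :=
      add_le_add hT1b hT2b
  _ ≤ ε₁ * (S + ε₀) ^ 2 + ε₀ * (sigmaMin B ^ 2)⁻¹ * (2 * S + ε₀) := by
      have heq : ε₀ * (2*S + ε₀) / sigmaMin B ^2 = ε₀ * (sigmaMin B ^ 2)⁻¹ * (2 * S + ε₀) := by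
        ring
      rw [heq]
      linarith [hT2final]
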